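/- arXiv:math/0610956 — 2 statements merged into one kernel-verified Lean document; each statement's English description precedes it below -/
import Mathlib

section
/- (Rigidity of fast periodic orbits; the Wirtinger-inequality argument proved in the paper's Lemma 3.1, adapted from Hofer–Zehnder.) Let m ≥ 1, T > 0, and let V : ℝ × ℝ^m → ℝ^m be continuously differentiable. Let γ : ℝ → ℝ^m be a continuously differentiable T-periodic function (γ(t + T) = γ(t) for all t) solving γ′(t) = V(t, γ(t)) for all t. Suppose there are constants a ≥ 0 and b ≥ 0 with a + b < 2π/T such that for every t: ‖∂ₜV(t, γ(t))‖ ≤ a‖γ′(t)‖ and the operator norm of the spatial derivative satisfies ‖D_x V(t, γ(t))‖ ≤ b. Then γ is constant. -/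
/-!
The velocity `u = γ'` is `T`-periodic with zero mean over every period, and by the chain rule
its derivative `u' = ∂ₜV + D_xV · u` satisfies `‖u'‖ ≤ (a + b) ‖u‖` along `γ`. Wirtinger's
inequality, which follows from Parseval's identity because the `n`-th Fourier coefficient of `u`
is that of `u'` divided by `2πin/T`, then gives
`‖u‖_{L²} ≤ T/(2π) ‖u'‖_{L²} ≤ T(a + b)/(2π) ‖u‖_{L²}` on each period, and `T(a + b)/(2π) < 1`
forces `u = 0`.
-/

open MeasureTheory Set Complex Real

theorem Function.Periodic.deriv {𝕜 F : Type*} [NontriviallyNormedField 𝕜] [NormedAddCommGroup F]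
    [NormedSpace 𝕜 F] {f : 𝕜 → F} {T : 𝕜} (hf : Function.Periodic f T) :
    Function.Periodic (deriv f) T := fun x => by
  rw [← deriv_comp_add_const, funext hf]

theorem fderiv_uncurry_apply_one {𝕜 E F : Type*} [NontriviallyNormedField 𝕜]
    [NormedAddCommGroup E] [NormedSpace 𝕜 E] [NormedAddCommGroup F] [NormedSpace 𝕜 F]
    {V : 𝕜 → E → F} {t : 𝕜} {x : E}
    (hV : DifferentiableAt 𝕜 (fun p : 𝕜 × E => V p.1 p.2) (t, x)) (v : E) :
    fderiv 𝕜 (fun p : 𝕜 × E => V p.1 p.2) (t, x) (1, v)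
      = deriv (fun s => V s x) t + fderiv 𝕜 (V t) x v := by
  set D := fderiv 𝕜 (fun p : 𝕜 × E => V p.1 p.2) (t, x)
  have ht : HasDerivAt (fun s => V s x) (D (1, 0)) t :=
    (hV.hasFDerivAt.comp_hasDerivAt t ((hasDerivAt_id t).prodMk (hasDerivAt_const t x)) :)
  have hx : HasFDerivAt (V t) (D.comp (ContinuousLinearMap.inr 𝕜 𝕜 E)) x :=
    (hV.hasFDerivAt.comp x ((hasFDerivAt_const t x).prodMk (hasFDerivAt_id x)) :)
  rw [ht.deriv, hx.fderiv, ContinuousLinearMap.comp_apply, ContinuousLinearMap.inr_apply,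
    ← map_add, Prod.mk_add_mk, add_zero, zero_add]

section Wirtinger

variable {a b : ℝ}

theorem fourierCoeffOn_eq_mul_fourierCoeffOn_deriv {f f' : ℝ → ℂ} (hab : a < b) {n : ℤ}
    (hn : n ≠ 0) (hf : ∀ x ∈ Icc a b, HasDerivAt f (f' x) x)
    (hf' : IntervalIntegrable f' volume a b) (hfab : f a = f b) :
    fourierCoeffOn hab f n = (b - a) / (2 * π * I * n) * fourierCoeffOn hab f' n := by
  rw [fourierCoeffOn_of_hasDerivAt hab hn (by rwa [uIcc_of_le hab.le]) hf', hfab, sub_self,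
    mul_zero, zero_sub]
  have : (n : ℂ) ≠ 0 := Int.cast_ne_zero.mpr hn
  field_simp

theorem fourierCoeffOn_zero (hab : a < b) (f : ℝ → ℂ) :
    fourierCoeffOn hab f 0 = (b - a)⁻¹ * ∫ x in a..b, f x := by
  simp [fourierCoeffOn_eq_integral]

theorem norm_fourierCoeffOn_le_of_hasDerivAt {f f' : ℝ → ℂ} (hab : a < b) (n : ℤ)
    (hf : ∀ x ∈ Icc a b, HasDerivAt f (f' x) x) (hf' : IntervalIntegrable f' volume a b)
    (hfab : f a = f b) (hmean : ∫ x in a..b, f x = 0) :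
    ‖fourierCoeffOn hab f n‖ ≤ (b - a) / (2 * π) * ‖fourierCoeffOn hab f' n‖ := by
  have hba := sub_pos.2 hab
  rcases eq_or_ne n 0 with rfl | hn
  · rw [fourierCoeffOn_zero, hmean, mul_zero, norm_zero]
    positivity
  · rw [fourierCoeffOn_eq_mul_fourierCoeffOn_deriv hab hn hf hf' hfab, norm_mul]
    gcongr
    have hn1 : (1 : ℝ) ≤ |(n : ℝ)| := by exact_mod_cast Int.one_le_abs hn
    have : ‖((b : ℂ) - a) / (2 * π * I * n)‖ = (b - a) / (2 * π * |(n : ℝ)|) := by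
      rw [norm_div, ← ofReal_sub, norm_real, Real.norm_of_nonneg hba.le]
      simp [abs_of_pos pi_pos]
    rw [this]
    exact div_le_div_of_nonneg_left hba.le (by positivity)
      (le_mul_of_one_le_right (by positivity) hn1)

theorem ContinuousOn.memLp_two_restrict_Ioc {E : Type*} [NormedAddCommGroup E] {g : ℝ → E}
    (hg : ContinuousOn g (Icc a b)) : MemLp g 2 (volume.restrict (Ioc a b)) :=
  (memLp_two_iff_integrable_sq_norm
    ((hg.mono Ioc_subset_Icc_self).aestronglyMeasurable measurableSet_Ioc)).2
    ((hg.norm.pow 2).integrableOn_Icc.mono_set Ioc_subset_Icc_self)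

theorem Complex.wirtinger_inequality {f f' : ℝ → ℂ} (hab : a < b)
    (hf : ∀ x ∈ Icc a b, HasDerivAt f (f' x) x) (hf' : ContinuousOn f' (Icc a b))
    (hfab : f a = f b) (hmean : ∫ x in a..b, f x = 0) :
    ∫ x in a..b, ‖f x‖ ^ 2 ≤ ((b - a) / (2 * π)) ^ 2 * ∫ x in a..b, ‖f' x‖ ^ 2 := by
  have hfc : ContinuousOn f (Icc a b) := fun x hx => (hf x hx).continuousAt.continuousWithinAt
  have hcoeff (n : ℤ) : ‖fourierCoeffOn hab f n‖ ^ 2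
      ≤ ((b - a) / (2 * π)) ^ 2 * ‖fourierCoeffOn hab f' n‖ ^ 2 := by
    rw [← mul_pow]
    gcongr
    exact norm_fourierCoeffOn_le_of_hasDerivAt hab n hf (hf'.intervalIntegrable_of_Icc hab.le)
      hfab hmean
  have hparseval := hasSum_le hcoeff (hasSum_sq_fourierCoeffOn hab hfc.memLp_two_restrict_Ioc)
    ((hasSum_sq_fourierCoeffOn hab hf'.memLp_two_restrict_Ioc).mul_left _)
  rw [smul_eq_mul, smul_eq_mul, mul_left_comm] at hparseval
  exact le_of_mul_le_mul_left hparseval (inv_pos.2 (sub_pos.2 hab))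

theorem wirtinger_inequality {E : Type*} [NormedAddCommGroup E] [InnerProductSpace ℝ E]
    [FiniteDimensional ℝ E] {f f' : ℝ → E} (hab : a < b)
    (hf : ∀ x ∈ Icc a b, HasDerivAt f (f' x) x) (hf' : ContinuousOn f' (Icc a b))
    (hfab : f a = f b) (hmean : ∫ x in a..b, f x = 0) :
    ∫ x in a..b, ‖f x‖ ^ 2 ≤ ((b - a) / (2 * π)) ^ 2 * ∫ x in a..b, ‖f' x‖ ^ 2 := by
  let e := stdOrthonormalBasis ℝ E
  let L i : E →L[ℝ] ℂ := ofRealCLM.comp (innerSL ℝ (e i))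
  have hL (x : E) : ∑ i, ‖L i x‖ ^ 2 = ‖x‖ ^ 2 := by
    simpa [L] using e.sum_sq_norm_inner_right x
  have hsum {g : ℝ → E} (hg : ContinuousOn g (Icc a b)) :
      ∫ x in a..b, ‖g x‖ ^ 2 = ∑ i, ∫ x in a..b, ‖L i (g x)‖ ^ 2 := by
    simp_rw [← hL]
    refine intervalIntegral.integral_finsetSum fun i _ => ?_
    exact (((L i).continuous.comp_continuousOn hg).norm.pow 2).intervalIntegrable_of_Icc hab.le
  have hfc : ContinuousOn f (Icc a b) := fun x hx => (hf x hx).continuousAt.continuousWithinAt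
  rw [hsum hfc, hsum hf', Finset.mul_sum]
  gcongr with i
  refine Complex.wirtinger_inequality hab
    (fun x hx => (L i).hasFDerivAt.comp_hasDerivAt x (hf x hx))
    ((L i).continuous.comp_continuousOn hf') (by rw [hfab]) ?_
  rw [(L i).intervalIntegral_comp_comm (hfc.intervalIntegrable_of_Icc hab.le), hmean, map_zero]

theorem eqOn_zero_of_norm_deriv_le_mul_norm {E : Type*} [NormedAddCommGroup E]
    [InnerProductSpace ℝ E] [FiniteDimensional ℝ E] {u w : ℝ → E} {c : ℝ} (hab : a < b)
    (hu : ∀ x ∈ Icc a b, HasDerivAt u (w x) x) (hw : ContinuousOn w (Icc a b))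
    (huab : u a = u b) (hmean : ∫ x in a..b, u x = 0) (hc₀ : 0 ≤ c) (hc : c < 2 * π / (b - a))
    (hwu : ∀ x ∈ Icc a b, ‖w x‖ ≤ c * ‖u x‖) :
    EqOn u 0 (Icc a b) := by
  have hba := sub_pos.2 hab
  have huc : ContinuousOn u (Icc a b) := fun x hx => (hu x hx).continuousAt.continuousWithinAt
  set I := ∫ x in a..b, ‖u x‖ ^ 2
  have hk : (b - a) / (2 * π) * c < 1 := by
    rw [div_mul_eq_mul_div, div_lt_one (by positivity)]
    rwa [lt_div_iff₀ hba, mul_comm] at hc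
  have hI : I ≤ ((b - a) / (2 * π) * c) ^ 2 * I := calc
    I ≤ ((b - a) / (2 * π)) ^ 2 * ∫ x in a..b, ‖w x‖ ^ 2 :=
      wirtinger_inequality hab hu hw huab hmean
    _ ≤ ((b - a) / (2 * π)) ^ 2 * ∫ x in a..b, c ^ 2 * ‖u x‖ ^ 2 := by
      gcongr
      refine intervalIntegral.integral_mono_on hab.le
        ((hw.norm.pow 2).intervalIntegrable_of_Icc hab.le)
        ((continuousOn_const.mul (huc.norm.pow 2)).intervalIntegrable_of_Icc hab.le)
        fun x hx => ?_
      rw [← mul_pow]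
      exact pow_le_pow_left₀ (norm_nonneg _) (hwu x hx) 2
    _ = ((b - a) / (2 * π) * c) ^ 2 * I := by
      rw [intervalIntegral.integral_const_mul]
      ring
  have hI₀ : I = 0 := by
    have hI_nonneg : 0 ≤ I := intervalIntegral.integral_nonneg hab.le fun x _ => sq_nonneg _
    have hk₀ : 0 ≤ (b - a) / (2 * π) * c := by positivity
    have hk₂ : ((b - a) / (2 * π) * c) ^ 2 < 1 := by nlinarith
    nlinarith
  intro x hx
  by_contra hux
  exact (intervalIntegral.integral_pos hab (huc.norm.pow 2) (fun y _ => sq_nonneg _)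
    ⟨x, hx, pow_pos (norm_pos_iff.2 hux) 2⟩).ne' hI₀

end Wirtinger

theorem fast_periodic_orbit_constant_general
    (m : ℕ) (T : ℝ) (hT : 0 < T)
    (V : ℝ → EuclideanSpace ℝ (Fin m) → EuclideanSpace ℝ (Fin m))
    (hV : ContDiff ℝ 1 (fun p : ℝ × EuclideanSpace ℝ (Fin m) => V p.1 p.2))
    (γ : ℝ → EuclideanSpace ℝ (Fin m))
    (hper : ∀ t, γ (t + T) = γ t)
    (hode : ∀ t, HasDerivAt γ (V t (γ t)) t)
    (a b : ℝ) (ha : 0 ≤ a) (hb : 0 ≤ b) (hab : a + b < 2 * Real.pi / T)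
    (hta : ∀ t, ‖deriv (fun s => V s (γ t)) t‖ ≤ a * ‖deriv γ t‖)
    (hxb : ∀ t, ‖fderiv ℝ (V t) (γ t)‖ ≤ b) :
    ∀ s t, γ s = γ t := by
  let u t := V t (γ t)
  let w t := fderiv ℝ (fun p : ℝ × EuclideanSpace ℝ (Fin m) => V p.1 p.2) (t, γ t) (1, u t)
  have hγ' t : deriv γ t = u t := (hode t).deriv
  have hpath : Continuous fun t => (t, γ t) :=
    continuous_id.prodMk (continuous_iff_continuousAt.2 fun t => (hode t).continuousAt)
  have hu : Continuous u := hV.continuous.comp hpath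
  have hw : Continuous w :=
    ((hV.continuous_fderiv one_ne_zero).comp hpath).clm_apply (continuous_const.prodMk hu)
  have huw t : HasDerivAt u (w t) t :=
    ((hV.differentiable one_ne_zero _).hasFDerivAt.comp_hasDerivAt t
      ((hasDerivAt_id t).prodMk (hode t)) :)
  have hwu t : ‖w t‖ ≤ (a + b) * ‖u t‖ := calc
    ‖w t‖ = ‖deriv (fun s => V s (γ t)) t + fderiv ℝ (V t) (γ t) (u t)‖ :=
      congrArg norm (fderiv_uncurry_apply_one (hV.differentiable one_ne_zero _) (u t))
    _ ≤ a * ‖u t‖ + b * ‖u t‖ := by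
      refine (norm_add_le _ _).trans (add_le_add (hγ' t ▸ hta t) ?_)
      exact (ContinuousLinearMap.le_opNorm _ _).trans
        (mul_le_mul_of_nonneg_right (hxb t) (norm_nonneg _))
    _ = (a + b) * ‖u t‖ := by ring
  have hu₀ s : u s = 0 := by
    have hus : u s = u (s + T) := by rw [← hγ', ← hγ', Function.Periodic.deriv hper s]
    have hmean : ∫ x in s..s + T, u x = 0 := by
      rw [intervalIntegral.integral_eq_sub_of_hasDerivAt (fun x _ => hode x)
        (hu.intervalIntegrable _ _), hper, sub_self]
    refine eqOn_zero_of_norm_deriv_le_mul_norm (lt_add_of_pos_right s hT) (fun x _ => huw x)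
      hw.continuousOn hus hmean (by positivity) (by rwa [add_sub_cancel_left])
      (fun x _ => hwu x) ⟨le_rfl, by linarith⟩
  exact fun s t => is_const_of_deriv_eq_zero (fun x => (hode x).differentiableAt)
    (fun x => (hγ' x).trans (hu₀ x)) s t

/-- **Rigidity of fast periodic orbits** (the Wirtinger-inequality argument).
A `T`-periodic `C¹` solution `γ` of `γ′(t) = V(t, γ(t))` is constant provided that
along `γ` the time derivative of `V` is bounded by `a‖γ′‖`, the spatial derivative of
`V` is bounded by `b`, and `a + b < 2π/T`. -/
theorem fast_periodic_orbit_constant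
    (m : ℕ) (hm : 1 ≤ m) (T : ℝ) (hT : 0 < T)
    (V : ℝ → EuclideanSpace ℝ (Fin m) → EuclideanSpace ℝ (Fin m))
    (hV : ContDiff ℝ 1 (fun p : ℝ × EuclideanSpace ℝ (Fin m) => V p.1 p.2))
    (γ : ℝ → EuclideanSpace ℝ (Fin m))
    (hγ : ContDiff ℝ 1 γ)
    (hper : ∀ t, γ (t + T) = γ t)
    (hode : ∀ t, HasDerivAt γ (V t (γ t)) t)
    (a b : ℝ) (ha : 0 ≤ a) (hb : 0 ≤ b) (hab : a + b < 2 * Real.pi / T)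
    (hta : ∀ t, ‖deriv (fun s => V s (γ t)) t‖ ≤ a * ‖deriv γ t‖)
    (hxb : ∀ t, ‖fderiv ℝ (V t) (γ t)‖ ≤ b) :
    ∀ s t, γ s = γ t :=
  fast_periodic_orbit_constant_general m T hT V hV γ hper hode a b ha hb hab hta hxb
end

section
/- (Uniform isolation of constant periodic orbits; the key step in the proof of the paper's Lemma 3.1.) Let m ≥ 1, T > 0, let U ⊆ ℝ^m be open, let W : U → ℝ^m be continuous, and let V : ℝ × U → ℝ^m be continuously differentiable and T-periodic in the time variable. Suppose there are constants 0 ≤ ε < 1 and b ≥ 0 with T·(ε(1−ε)⁻¹ + b) < 2π such that for all t ∈ ℝ and x ∈ U: ‖V(t,x) − W(x)‖ ≤ ε‖W(x)‖, ‖∂ₜV(t,x)‖ ≤ ε‖W(x)‖, and ‖D_xV(t,x)‖ ≤ b. Then every continuously differentiable T-periodic solution γ : ℝ → U of γ′(t) = V(t, γ(t)) is constant, and its value is a zero of W, i.e. W(γ(0)) = 0. In particular, if p is the only zero of W in U, then the constant map at p is the only T-periodic solution of the equation with image in U. -/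
/-!
Along a `T`-periodic solution `γ`, the velocity `f t = V t (γ t)` is `T`-periodic with mean zero
(`∫₀ᵀ f = γ T - γ 0`), and the chain rule with the hypotheses gives `‖f'‖ ≤ c ‖f‖` for
`c = ε (1 - ε)⁻¹ + b`. Wirtinger's inequality `∫₀ᵀ ‖f‖² ≤ (T / 2π)² ∫₀ᵀ ‖f'‖²` then forces
`∫₀ᵀ ‖f‖² = 0` because `T c < 2π`; so `γ` is constant and `‖W (γ 0)‖ ≤ ε ‖W (γ 0)‖`.

Wirtinger's inequality is proved coordinatewise. By the intermediate value theorem a periodic `h`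
takes equal values at some `a` and `a + T/2`, so on each half period `h - h a` vanishes at both
ends; there the Dirichlet version follows by integrating
`(k h² cot (k (t - a)))' = h'² - k² h² - (h' - k h cot (k (t - a)))²`, with `k` equal to `π`
over the length of the interval, and the mean-zero condition gives `∫₀ᵀ h² ≤ ∫₀ᵀ (h - h a)²`.
-/

open Real Set Filter Topology intervalIntegral Function

theorem tendsto_sq_div_nhdsNE_of_hasDerivAt {f g : ℝ → ℝ} {a c x : ℝ} (hf : HasDerivAt f a x)
    (hg : HasDerivAt g c x) (hfx : f x = 0) (hgx : g x = 0) (hc : c ≠ 0) :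
    Tendsto (fun t => f t ^ 2 / g t) (𝓝[≠] x) (𝓝 0) := by
  have hlim : Tendsto (fun t => slope f x t ^ 2 / slope g x t * (t - x)) (𝓝[≠] x)
      (𝓝 (a ^ 2 / c * (x - x))) :=
    (((hasDerivAt_iff_tendsto_slope.1 hf).pow 2).div (hasDerivAt_iff_tendsto_slope.1 hg) hc).mul
      ((continuous_id.sub continuous_const).tendsto x |>.mono_left nhdsWithin_le_nhds)
  rw [sub_self, mul_zero] at hlim
  refine hlim.congr' ?_
  filter_upwards [self_mem_nhdsWithin] with t ht
  have htx : t - x ≠ 0 := sub_ne_zero.2 ht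
  simp only [slope_def_field, hfx, hgx, sub_zero]
  rcases eq_or_ne (g t) 0 with hgt | hgt
  · simp [hgt]
  · field_simp

theorem hasDerivAt_mul_sq_mul_cot {h : ℝ → ℝ} {h' k a t : ℝ} (hd : HasDerivAt h h' t)
    (hs : sin (k * (t - a)) ≠ 0) :
    HasDerivAt (fun s => k * h s ^ 2 * cot (k * (s - a)))
      (h' ^ 2 - k ^ 2 * h t ^ 2 - (h' - k * h t * cot (k * (t - a))) ^ 2) t := by
  have hlin : HasDerivAt (fun s => k * (s - a)) k t := by
    simpa using ((hasDerivAt_id t).sub_const a).const_mul k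
  have hcot : HasDerivAt (fun s => cot (k * (s - a))) (-k * (1 + cot (k * (t - a)) ^ 2)) t := by
    simp only [cot_eq_cos_div_sin]
    refine (hlin.cos.div hlin.sin hs).congr_deriv ?_
    field_simp
    ring
  refine (((hd.fun_pow 2).const_mul k).mul hcot).congr_deriv ?_
  push_cast
  ring

theorem continuousAt_mul_sq_mul_cot {h : ℝ → ℝ} {h' k a x : ℝ} (hd : HasDerivAt h h' x)
    (hx : h x = 0) (hk : k ≠ 0) (hs : sin (k * (x - a)) = 0) :
    ContinuousAt (fun s => k * h s ^ 2 * cot (k * (s - a))) x := by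
  have hcos : cos (k * (x - a)) ≠ 0 := fun hc => by
    simpa [hs, hc] using sin_sq_add_cos_sq (k * (x - a))
  have hlin : HasDerivAt (fun s => k * (s - a)) k x := by
    simpa using ((hasDerivAt_id x).sub_const a).const_mul k
  rw [← continuousWithinAt_compl_self, ContinuousWithinAt]
  have hlim := tendsto_sq_div_nhdsNE_of_hasDerivAt hd hlin.sin hx hs (mul_ne_zero hcos hk)
  have hcos_lim : Tendsto (fun t => k * cos (k * (t - a))) (𝓝[≠] x)
      (𝓝 (k * cos (k * (x - a)))) :=
    ((by fun_prop : Continuous fun t => k * cos (k * (t - a))).tendsto x).mono_left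
      nhdsWithin_le_nhds
  convert hcos_lim.mul hlim using 2 with t
  · simp only [cot_eq_cos_div_sin]
    ring
  · simp [cot_eq_cos_div_sin, hs]

theorem mul_sq_mul_cot_sub_le_integral {h h' : ℝ → ℝ} {k a α β : ℝ}
    (hd : ∀ t, HasDerivAt h (h' t) t) (hc : Continuous h') (hk : 0 < k) (hα : a < α)
    (hαβ : α ≤ β) (hβ : k * (β - a) < π) :
    k * h β ^ 2 * cot (k * (β - a)) - k * h α ^ 2 * cot (k * (α - a))
      ≤ ∫ t in α..β, (h' t ^ 2 - k ^ 2 * h t ^ 2) := by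
  have hh : Continuous h := continuous_iff_continuousAt.2 fun t => (hd t).continuousAt
  have hw : ∀ t ∈ Icc α β, HasDerivAt (fun s => k * h s ^ 2 * cot (k * (s - a)))
      (h' t ^ 2 - k ^ 2 * h t ^ 2 - (h' t - k * h t * cot (k * (t - a))) ^ 2) t := by
    intro t ht
    refine hasDerivAt_mul_sq_mul_cot (hd t) (sin_pos_of_pos_of_lt_pi ?_ ?_).ne'
    · exact mul_pos hk (by linarith [ht.1])
    · exact lt_of_le_of_lt (by gcongr; exact ht.2) hβ
  exact sub_le_integral_of_hasDeriv_right_of_le hαβ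
    (fun t ht => (hw t ht).continuousAt.continuousWithinAt)
    (fun t ht => (hw t (Ioo_subset_Icc_self ht)).hasDerivWithinAt)
    (by fun_prop : Continuous fun t => h' t ^ 2 - k ^ 2 * h t ^ 2).integrableOn_Icc
    (fun t _ => sub_le_self _ (sq_nonneg _))

theorem integral_sq_le_of_eq_zero_of_eq_zero {a b : ℝ} (hab : a < b) {h h' : ℝ → ℝ}
    (hd : ∀ t, HasDerivAt h (h' t) t) (hc : Continuous h') (ha : h a = 0) (hb : h b = 0) :
    ∫ t in a..b, h t ^ 2 ≤ ((b - a) / π) ^ 2 * ∫ t in a..b, h' t ^ 2 := by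
  have hh : Continuous h := continuous_iff_continuousAt.2 fun t => (hd t).continuousAt
  set k := π / (b - a) with hk
  have hk0 : 0 < k := div_pos pi_pos (sub_pos.2 hab)
  have hkb : k * (b - a) = π := div_mul_cancel₀ _ (sub_pos.2 hab).ne'
  set g : ℝ → ℝ := fun t => h' t ^ 2 - k ^ 2 * h t ^ 2
  have hgc : Continuous g := by fun_prop
  set w : ℝ → ℝ := fun t => k * h t ^ 2 * cot (k * (t - a)) with hw
  set ψ : ℝ → ℝ := fun x => (∫ t in a..x, g t) - w x with hψ
  have hψ_mono : ∀ α β, a < α → α ≤ β → β < b → ψ α ≤ ψ β := by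
    intro α β hα hαβ hβ
    have := mul_sq_mul_cot_sub_le_integral hd hc hk0 hα hαβ
      (by rw [← hkb]; gcongr)
    have := integral_add_adjacent_intervals (μ := MeasureTheory.volume)
      (hgc.intervalIntegrable a α) (hgc.intervalIntegrable α β)
    simp only [hψ, hw]
    linarith
  -- At `a` and `b` the junk value `cot 0 = cot π = 0` (from `x / 0 = 0`) is also the limit of `w`.
  have hψ_cont : ∀ x, h x = 0 → sin (k * (x - a)) = 0 → ContinuousAt ψ x := fun x hx hs =>
    ((continuous_primitive (fun _ _ => hgc.intervalIntegrable _ _) a).continuousAt).sub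
      (continuousAt_mul_sq_mul_cot (hd x) hx hk0.ne' hs)
  have hsin_b : sin (k * (b - a)) = 0 := by rw [hkb, sin_pi]
  have hψ_le : ψ a ≤ ψ b := by
    have hleft : Tendsto (fun δ => ψ (a + δ)) (𝓝[>] 0) (𝓝 (ψ a)) :=
      ((hψ_cont a ha (by simp)).tendsto.comp
        ((continuous_const_add a).tendsto' 0 a (add_zero a))).mono_left nhdsWithin_le_nhds
    have hright : Tendsto (fun δ => ψ (b - δ)) (𝓝[>] 0) (𝓝 (ψ b)) :=
      ((hψ_cont b hb hsin_b).tendsto.comp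
        ((continuous_sub_left b).tendsto' 0 b (sub_zero b))).mono_left nhdsWithin_le_nhds
    refine le_of_tendsto_of_tendsto hleft hright ?_
    filter_upwards [Ioo_mem_nhdsGT (show (0 : ℝ) < (b - a) / 2 by linarith)] with δ hδ
    exact hψ_mono _ _ (by linarith [hδ.1]) (by linarith [hδ.2]) (by linarith [hδ.1])
  have hg_nonneg : 0 ≤ ∫ t in a..b, (h' t ^ 2 - k ^ 2 * h t ^ 2) := by
    simpa [hψ, hw, hsin_b, cot_eq_cos_div_sin] using hψ_le
  rw [integral_sub (f := fun t => h' t ^ 2) (g := fun t => k ^ 2 * h t ^ 2)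
    ((hc.pow 2).intervalIntegrable _ _) (((hh.pow 2).const_mul _).intervalIntegrable _ _),
    integral_const_mul] at hg_nonneg
  have hk_sq : ((b - a) / π) ^ 2 = (k ^ 2)⁻¹ := by rw [hk, ← inv_div, inv_pow]
  rw [hk_sq, inv_mul_eq_div, le_div_iff₀ (by positivity)]
  linarith

theorem Function.Periodic.exists_apply_add_half_eq {h : ℝ → ℝ} {T : ℝ} (hper : Periodic h T)
    (hh : Continuous h) : ∃ a, h (a + T / 2) = h a := by
  set G : ℝ → ℝ := fun t => h (t + T / 2) - h t with hG
  have hG_half : G (T / 2) = -G 0 := by simp [hG, hper.eq]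
  have h0 : (0 : ℝ) ∈ uIcc (G 0) (G (T / 2)) := by
    rw [hG_half, mem_uIcc]
    rcases le_total (G 0) 0 with hneg | hpos
    · exact Or.inl ⟨hneg, by linarith⟩
    · exact Or.inr ⟨by linarith, hpos⟩
  obtain ⟨a, -, ha⟩ := intermediate_value_uIcc (by fun_prop : Continuous G).continuousOn h0
  exact ⟨a, sub_eq_zero.1 ha⟩

theorem integral_sq_le_of_periodic {T : ℝ} (hT : 0 < T) {h h' : ℝ → ℝ}
    (hd : ∀ t, HasDerivAt h (h' t) t) (hc : Continuous h') (hper : Periodic h T)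
    (hmean : ∫ t in 0..T, h t = 0) :
    ∫ t in 0..T, h t ^ 2 ≤ (T / (2 * π)) ^ 2 * ∫ t in 0..T, h' t ^ 2 := by
  have hh : Continuous h := continuous_iff_continuousAt.2 fun t => (hd t).continuousAt
  have hper' : Periodic h' T := fun t =>
    ((hd (t + T)).comp_add_const t T).unique
      ((hd t).congr_of_eventuallyEq (.of_forall hper))
  obtain ⟨a, ha⟩ := hper.exists_apply_add_half_eq hh
  set u : ℝ → ℝ := fun t => h t - h a with hu
  have hud : ∀ t, HasDerivAt u (h' t) t := fun t => (hd t).sub_const _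
  have I₁ := integral_sq_le_of_eq_zero_of_eq_zero (by linarith : a < a + T / 2) hud hc
    (sub_self _) (by simp [hu, ha])
  have I₂ := integral_sq_le_of_eq_zero_of_eq_zero (by linarith : a + T / 2 < a + T) hud hc
    (by simp [hu, ha]) (by simp [hu, hper a])
  rw [add_sub_cancel_left, div_div] at I₁
  rw [show a + T - (a + T / 2) = T / 2 by ring, div_div] at I₂
  have hsplit : ∀ f : ℝ → ℝ, Continuous f → Periodic f T →
      ∫ t in 0..T, f t = (∫ t in a..a + T / 2, f t) + ∫ t in a + T / 2..a + T, f t := by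
    intro f hf hfT
    have hshift := hfT.intervalIntegral_add_eq a 0
    rw [zero_add] at hshift
    rw [← hshift, integral_add_adjacent_intervals (hf.intervalIntegrable _ _)
      (hf.intervalIntegrable _ _)]
  have hexpand : ∫ t in 0..T, u t ^ 2 = (∫ t in 0..T, h t ^ 2) + T * h a ^ 2 := by
    have hsq : ∀ t, u t ^ 2 = (h t ^ 2 - 2 * h a * h t) + h a ^ 2 := fun t => by ring
    simp_rw [hsq]
    rw [integral_add (f := fun t => h t ^ 2 - 2 * h a * h t) (g := fun _ => h a ^ 2)
      (((hh.pow 2).sub (hh.const_mul _)).intervalIntegrable _ _) intervalIntegrable_const,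
      integral_sub (f := fun t => h t ^ 2) (g := fun t => 2 * h a * h t)
      ((hh.pow 2).intervalIntegrable _ _) ((hh.const_mul _).intervalIntegrable _ _),
      integral_const_mul, hmean, integral_const]
    simp
  have hu_sq := hsplit (fun t => u t ^ 2) (by fun_prop) fun t => by simp [hu, hper t]
  have hh'_sq := hsplit (fun t => h' t ^ 2) (by fun_prop) fun t => by simp [hper' t]
  rw [hh'_sq, mul_add]
  linarith [mul_nonneg hT.le (sq_nonneg (h a))]

theorem integral_norm_sq_le_of_periodic {ι : Type*} [Fintype ι] {T : ℝ} (hT : 0 < T)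
    {f f' : ℝ → EuclideanSpace ℝ ι} (hd : ∀ t, HasDerivAt f (f' t) t) (hc : Continuous f')
    (hper : Periodic f T) (hmean : ∫ t in 0..T, f t = 0) :
    ∫ t in 0..T, ‖f t‖ ^ 2 ≤ (T / (2 * π)) ^ 2 * ∫ t in 0..T, ‖f' t‖ ^ 2 := by
  have hf : Continuous f := continuous_iff_continuousAt.2 fun t => (hd t).continuousAt
  have hcoord : ∀ g : ℝ → EuclideanSpace ℝ ι, Continuous g →
      ∫ t in 0..T, ‖g t‖ ^ 2 = ∑ i, ∫ t in 0..T, g t i ^ 2 := by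
    intro g hg
    simp_rw [EuclideanSpace.norm_sq_eq, Real.norm_eq_abs, sq_abs]
    exact integral_finsetSum fun i _ =>
      (((EuclideanSpace.proj i).continuous.comp hg).pow 2).intervalIntegrable _ _
  rw [hcoord f hf, hcoord f' hc, Finset.mul_sum]
  refine Finset.sum_le_sum fun i _ => integral_sq_le_of_periodic hT
    (fun t => (EuclideanSpace.proj (𝕜 := ℝ) i).hasFDerivAt.comp_hasDerivAt t (hd t))
    ((EuclideanSpace.proj i).continuous.comp hc) (fun t => by simp [hper t]) ?_
  have := (EuclideanSpace.proj (𝕜 := ℝ) i).intervalIntegral_comp_comm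
    (hf.intervalIntegrable (μ := MeasureTheory.volume) 0 T)
  rw [hmean, map_zero] at this
  exact this

theorem Function.Periodic.eq_zero_of_integral_norm_sq_eq_zero {E : Type*} [NormedAddCommGroup E]
    {T : ℝ} (hT : 0 < T) {f : ℝ → E} (hper : Periodic f T) (hf : Continuous f)
    (h0 : ∫ t in 0..T, ‖f t‖ ^ 2 = 0) : f = 0 := by
  have hae := (integral_eq_zero_iff_of_le_of_nonneg_ae hT.le (.of_forall fun t => sq_nonneg _)
    ((hf.norm.pow 2).intervalIntegrable _ _)).1 h0
  rw [MeasureTheory.Measure.restrict_congr_set MeasureTheory.Ioc_ae_eq_Icc] at hae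
  have hIcc := MeasureTheory.Measure.eqOn_Icc_of_ae_eq MeasureTheory.volume hT.ne hae
    (hf.norm.pow 2).continuousOn continuousOn_const
  funext t
  obtain ⟨y, hy, hty⟩ := hper.exists_mem_Ico₀ hT t
  simpa [hty] using hIcc (Ico_subset_Icc_self hy)

theorem eq_zero_of_periodic_of_norm_deriv_le {ι : Type*} [Fintype ι] {T c : ℝ} (hT : 0 < T)
    (hc0 : 0 ≤ c) (hTc : T * c < 2 * π) {f f' : ℝ → EuclideanSpace ℝ ι}
    (hd : ∀ t, HasDerivAt f (f' t) t) (hc : Continuous f') (hper : Periodic f T)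
    (hmean : ∫ t in 0..T, f t = 0) (hbound : ∀ t, ‖f' t‖ ≤ c * ‖f t‖) : f = 0 := by
  have hf : Continuous f := continuous_iff_continuousAt.2 fun t => (hd t).continuousAt
  set I := ∫ t in 0..T, ‖f t‖ ^ 2
  have hI0 : 0 ≤ I := integral_nonneg hT.le fun t _ => sq_nonneg _
  have hJ : ∫ t in 0..T, ‖f' t‖ ^ 2 ≤ c ^ 2 * I := by
    rw [← integral_const_mul]
    refine integral_mono_on hT.le ((hc.norm.pow 2).intervalIntegrable _ _)
      (((hf.norm.pow 2).const_mul _).intervalIntegrable _ _) fun t _ => ?_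
    rw [← mul_pow]
    exact pow_le_pow_left₀ (norm_nonneg _) (hbound t) 2
  have hq : (T / (2 * π)) ^ 2 * c ^ 2 < 1 := by
    rw [← mul_pow, div_mul_eq_mul_div]
    exact pow_lt_one₀ (by positivity) ((div_lt_one (by positivity)).2 hTc) two_ne_zero
  have hI_eq : I = 0 := by
    nlinarith [integral_norm_sq_le_of_periodic hT hd hc hper hmean,
      mul_le_mul_of_nonneg_left hJ (sq_nonneg (T / (2 * π)))]
  exact hper.eq_zero_of_integral_norm_sq_eq_zero hT hf hI_eq

theorem norm_le_of_norm_sub_le_mul {F : Type*} [SeminormedAddCommGroup F] {v w : F} {ε : ℝ}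
    (hε : ε < 1) (h : ‖v - w‖ ≤ ε * ‖w‖) : ‖w‖ ≤ (1 - ε)⁻¹ * ‖v‖ := by
  rw [inv_mul_eq_div, le_div_iff₀ (sub_pos.2 hε)]
  linarith [norm_sub_norm_le w v, norm_sub_rev v w]

section VectorField

variable {E : Type*} [NormedAddCommGroup E] [NormedSpace ℝ E] {V : ℝ → E → E} {U : Set E}

theorem hasDerivAt_vectorField_comp
    (hV : ContDiffOn ℝ 1 (fun p : ℝ × E => V p.1 p.2) (univ ×ˢ U)) (hU : IsOpen U)
    {γ : ℝ → E} {v : E} {t : ℝ} (hγ : HasDerivAt γ v t) (hγt : γ t ∈ U) :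
    HasDerivAt (fun s => V s (γ s)) (deriv (fun s => V s (γ t)) t + fderiv ℝ (V t) (γ t) v) t := by
  set D := fderiv ℝ (fun p : ℝ × E => V p.1 p.2) (t, γ t)
  have hD : HasFDerivAt (fun p : ℝ × E => V p.1 p.2) D (t, γ t) :=
    ((hV.differentiableOn one_ne_zero).differentiableAt
      ((isOpen_univ.prod hU).mem_nhds ⟨trivial, hγt⟩)).hasFDerivAt
  have htime : deriv (fun s => V s (γ t)) t = D (1, 0) := by
    have := hD.comp_hasDerivAt t ((hasDerivAt_id t).prodMk (hasDerivAt_const t (γ t)))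
    exact this.deriv
  have hspace : fderiv ℝ (V t) (γ t) = D.comp (ContinuousLinearMap.inr ℝ ℝ E) :=
    (hD.comp (γ t) (hasFDerivAt_prodMk_right t (γ t))).fderiv
  rw [htime, hspace, ContinuousLinearMap.comp_apply, ContinuousLinearMap.inr_apply, ← map_add,
    Prod.mk_add_mk, add_zero, zero_add]
  exact hD.comp_hasDerivAt t ((hasDerivAt_id t).prodMk hγ)

theorem norm_deriv_vectorField_comp_le
    (hV : ContDiffOn ℝ 1 (fun p : ℝ × E => V p.1 p.2) (univ ×ˢ U)) (hU : IsOpen U)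
    {W : E → E} {ε b : ℝ} (hε0 : 0 ≤ ε) (hε1 : ε < 1)
    (h1 : ∀ t, ∀ x ∈ U, ‖V t x - W x‖ ≤ ε * ‖W x‖)
    (h2 : ∀ t, ∀ x ∈ U, ‖deriv (fun s => V s x) t‖ ≤ ε * ‖W x‖)
    (h3 : ∀ t, ∀ x ∈ U, ‖fderiv ℝ (V t) x‖ ≤ b)
    {γ : ℝ → E} {t : ℝ} (hγ : HasDerivAt γ (V t (γ t)) t) (hγt : γ t ∈ U) :
    ‖deriv (fun s => V s (γ s)) t‖ ≤ (ε * (1 - ε)⁻¹ + b) * ‖V t (γ t)‖ := by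
  rw [(hasDerivAt_vectorField_comp hV hU hγ hγt).deriv]
  have hW := norm_le_of_norm_sub_le_mul hε1 (h1 t _ hγt)
  calc _ ≤ ε * ‖W (γ t)‖ + b * ‖V t (γ t)‖ :=
        norm_add_le_of_le (h2 t _ hγt) ((fderiv ℝ (V t) (γ t)).le_of_opNorm_le (h3 t _ hγt) _)
    _ ≤ ε * ((1 - ε)⁻¹ * ‖V t (γ t)‖) + b * ‖V t (γ t)‖ := by gcongr
    _ = _ := by ring

end VectorField

theorem vectorField_eq_zero_of_periodic_solution {ι : Type*} [Fintype ι]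
    {U : Set (EuclideanSpace ℝ ι)} {V : ℝ → EuclideanSpace ℝ ι → EuclideanSpace ℝ ι}
    {W : EuclideanSpace ℝ ι → EuclideanSpace ℝ ι} {T ε b : ℝ} (hT : 0 < T) (hU : IsOpen U)
    (hV : ContDiffOn ℝ 1 (fun p : ℝ × EuclideanSpace ℝ ι => V p.1 p.2) (univ ×ˢ U))
    (hVper : ∀ t x, V (t + T) x = V t x) (hε0 : 0 ≤ ε) (hε1 : ε < 1) (hb : 0 ≤ b)
    (hsmall : T * (ε * (1 - ε)⁻¹ + b) < 2 * π)
    (h1 : ∀ t, ∀ x ∈ U, ‖V t x - W x‖ ≤ ε * ‖W x‖)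
    (h2 : ∀ t, ∀ x ∈ U, ‖deriv (fun s => V s x) t‖ ≤ ε * ‖W x‖)
    (h3 : ∀ t, ∀ x ∈ U, ‖fderiv ℝ (V t) x‖ ≤ b)
    {γ : ℝ → EuclideanSpace ℝ ι} (hγU : ∀ t, γ t ∈ U) (hγ : ContDiff ℝ 1 γ)
    (hγper : Periodic γ T) (hγV : ∀ t, HasDerivAt γ (V t (γ t)) t) (t : ℝ) :
    V t (γ t) = 0 := by
  set f := fun s => V s (γ s)
  have hf : ContDiff ℝ 1 f :=
    hV.comp_contDiff (contDiff_id.prodMk hγ) fun t => ⟨trivial, hγU t⟩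
  have hfper : Periodic f T := fun t => by simp only [f, hγper t, hVper]
  have hmean : ∫ t in 0..T, f t = 0 := by
    rw [integral_eq_sub_of_hasDerivAt (fun t _ => hγV t) (hf.continuous.intervalIntegrable _ _),
      hγper.eq, sub_self]
  have hf_zero := eq_zero_of_periodic_of_norm_deriv_le hT (by positivity) hsmall
    (fun t => (hf.differentiable one_ne_zero t).hasDerivAt) (hf.continuous_deriv le_rfl) hfper hmean
    fun t => norm_deriv_vectorField_comp_le hV hU hε0 hε1 h1 h2 h3 (hγV t) (hγU t)
  exact congrFun hf_zero t

theorem constant_periodic_orbits_uniformly_isolated_general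
    (m : ℕ) (T : ℝ) (hT : 0 < T)
    (U : Set (EuclideanSpace ℝ (Fin m))) (hU : IsOpen U)
    (W : EuclideanSpace ℝ (Fin m) → EuclideanSpace ℝ (Fin m))
    (V : ℝ → EuclideanSpace ℝ (Fin m) → EuclideanSpace ℝ (Fin m))
    (hV : ContDiffOn ℝ 1 (fun p : ℝ × EuclideanSpace ℝ (Fin m) => V p.1 p.2)
      (Set.univ ×ˢ U))
    (hVper : ∀ t x, V (t + T) x = V t x)
    (ε b : ℝ) (hε0 : 0 ≤ ε) (hε1 : ε < 1) (hb : 0 ≤ b)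
    (hsmall : T * (ε * (1 - ε)⁻¹ + b) < 2 * Real.pi)
    (h1 : ∀ t : ℝ, ∀ x ∈ U, ‖V t x - W x‖ ≤ ε * ‖W x‖)
    (h2 : ∀ t : ℝ, ∀ x ∈ U, ‖deriv (fun s => V s x) t‖ ≤ ε * ‖W x‖)
    (h3 : ∀ t : ℝ, ∀ x ∈ U, ‖fderiv ℝ (V t) x‖ ≤ b) :
    (∀ γ : ℝ → EuclideanSpace ℝ (Fin m), (∀ t, γ t ∈ U) → ContDiff ℝ 1 γ →
      (∀ t, γ (t + T) = γ t) → (∀ t, HasDerivAt γ (V t (γ t)) t) →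
      (∀ s t, γ s = γ t) ∧ W (γ 0) = 0) ∧
    (∀ p ∈ U, (∀ x ∈ U, W x = 0 → x = p) →
      ∀ γ : ℝ → EuclideanSpace ℝ (Fin m), (∀ t, γ t ∈ U) → ContDiff ℝ 1 γ →
        (∀ t, γ (t + T) = γ t) → (∀ t, HasDerivAt γ (V t (γ t)) t) →
        ∀ t, γ t = p) := by
  have hsolution : ∀ γ : ℝ → EuclideanSpace ℝ (Fin m), (∀ t, γ t ∈ U) → ContDiff ℝ 1 γ →
      (∀ t, γ (t + T) = γ t) → (∀ t, HasDerivAt γ (V t (γ t)) t) →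
      (∀ s t, γ s = γ t) ∧ W (γ 0) = 0 := by
    intro γ hγU hγ hγper hγV
    have hV_zero := vectorField_eq_zero_of_periodic_solution hT hU hV hVper hε0 hε1 hb hsmall
      h1 h2 h3 hγU hγ hγper hγV
    refine ⟨is_const_of_deriv_eq_zero (fun t => (hγV t).differentiableAt)
      fun t => by rw [(hγV t).deriv, hV_zero t], ?_⟩
    have hW := norm_le_of_norm_sub_le_mul hε1 (h1 0 _ (hγU 0))
    rw [hV_zero 0, norm_zero, mul_zero] at hW
    exact norm_le_zero_iff.1 hW
  refine ⟨hsolution, fun p _ hp γ hγU hγ hγper hγV t => ?_⟩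
  obtain ⟨hconst, hW⟩ := hsolution γ hγU hγ hγper hγV
  rw [hconst t 0]
  exact hp _ (hγU 0) hW

/-- **Uniform isolation of constant periodic orbits.**  If a `T`-periodic
time-dependent vector field `V` on an open set `U ⊆ ℝ^m` is close to a reference
field `W` in the sense that `‖V − W‖ ≤ ε‖W‖`, `‖∂ₜV‖ ≤ ε‖W‖` and `‖D_xV‖ ≤ b`
with `T(ε(1−ε)⁻¹ + b) < 2π`, then every `T`-periodic `C¹` solution of
`γ′ = V(t, γ)` with image in `U` is constant and its value is a zero of `W`.
In particular, if `p` is the only zero of `W` in `U`, the constant map at `p`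
is the only such `T`-periodic solution. -/
theorem constant_periodic_orbits_uniformly_isolated
    (m : ℕ) (hm : 1 ≤ m) (T : ℝ) (hT : 0 < T)
    (U : Set (EuclideanSpace ℝ (Fin m))) (hU : IsOpen U)
    (W : EuclideanSpace ℝ (Fin m) → EuclideanSpace ℝ (Fin m))
    (hW : ContinuousOn W U)
    (V : ℝ → EuclideanSpace ℝ (Fin m) → EuclideanSpace ℝ (Fin m))
    (hV : ContDiffOn ℝ 1 (fun p : ℝ × EuclideanSpace ℝ (Fin m) => V p.1 p.2)
      (Set.univ ×ˢ U))
    (hVper : ∀ t x, V (t + T) x = V t x)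
    (ε b : ℝ) (hε0 : 0 ≤ ε) (hε1 : ε < 1) (hb : 0 ≤ b)
    (hsmall : T * (ε * (1 - ε)⁻¹ + b) < 2 * Real.pi)
    (h1 : ∀ t : ℝ, ∀ x ∈ U, ‖V t x - W x‖ ≤ ε * ‖W x‖)
    (h2 : ∀ t : ℝ, ∀ x ∈ U, ‖deriv (fun s => V s x) t‖ ≤ ε * ‖W x‖)
    (h3 : ∀ t : ℝ, ∀ x ∈ U, ‖fderiv ℝ (V t) x‖ ≤ b) :
    (∀ γ : ℝ → EuclideanSpace ℝ (Fin m), (∀ t, γ t ∈ U) → ContDiff ℝ 1 γ →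
      (∀ t, γ (t + T) = γ t) → (∀ t, HasDerivAt γ (V t (γ t)) t) →
      (∀ s t, γ s = γ t) ∧ W (γ 0) = 0) ∧
    (∀ p ∈ U, (∀ x ∈ U, W x = 0 → x = p) →
      ∀ γ : ℝ → EuclideanSpace ℝ (Fin m), (∀ t, γ t ∈ U) → ContDiff ℝ 1 γ →
        (∀ t, γ (t + T) = γ t) → (∀ t, HasDerivAt γ (V t (γ t)) t) →
        ∀ t, γ t = p) :=
  constant_periodic_orbits_uniformly_isolated_general m T hT U hU W V hV hVper ε b hε0 hε1 hb hsmall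
    h1 h2 h3
end
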